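/- For d = 1 and λ ∈ (0,1), define Λ*(x) = (x/2)ln λ − ln(2√λ/(1+λ)) + (1+x)ln√(1+x) + (1−x)ln√(1−x) for x ∈ [0,1]. Then Λ*(x) ≥ 0 with equality iff x = (1−λ)/(1+λ). -/

import Mathlib

/-! With `a = (1 + x) / 2` and `p = 1 / (1 + λ)`, the rate function `Λ*(x)` is the relative
entropy of the two-point distribution `(a, 1 - a)` with respect to `(p, 1 - p)`. Writing it as
`p · klFun (a / p) + (1 - p) · klFun ((1 - a) / (1 - p))` with `klFun t = t log t + 1 - t ≥ 0`,
vanishing only at `t = 1`, gives Gibbs' inequality together with its equality case `a = p`,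
i.e. `x = (1 - λ) / (1 + λ)`. -/

open Real InformationTheory

lemma mul_klFun_div {a p : ℝ} (hp : p ≠ 0) : p * klFun (a / p) = a * log (a / p) + p - a := by
  rw [klFun_apply]; field_simp

section TwoPoint

variable {a b p q : ℝ}

lemma mul_log_div_add_mul_log_div_eq (hp : p ≠ 0) (hq : q ≠ 0) (hsum : a + b = p + q) :
    a * log (a / p) + b * log (b / q) = p * klFun (a / p) + q * klFun (b / q) := by
  rw [mul_klFun_div hp, mul_klFun_div hq]; linarith

theorem mul_log_div_add_mul_log_div_nonneg (ha : 0 ≤ a) (hb : 0 ≤ b) (hp : 0 < p) (hq : 0 < q)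
    (hsum : a + b = p + q) : 0 ≤ a * log (a / p) + b * log (b / q) := by
  rw [mul_log_div_add_mul_log_div_eq hp.ne' hq.ne' hsum]
  exact add_nonneg (mul_nonneg hp.le (klFun_nonneg (div_nonneg ha hp.le)))
    (mul_nonneg hq.le (klFun_nonneg (div_nonneg hb hq.le)))

theorem mul_log_div_add_mul_log_div_eq_zero_iff (ha : 0 ≤ a) (hb : 0 ≤ b) (hp : 0 < p)
    (hq : 0 < q) (hsum : a + b = p + q) : a * log (a / p) + b * log (b / q) = 0 ↔ a = p := by
  rw [mul_log_div_add_mul_log_div_eq hp.ne' hq.ne' hsum,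
    add_eq_zero_iff_of_nonneg (mul_nonneg hp.le (klFun_nonneg (div_nonneg ha hp.le)))
      (mul_nonneg hq.le (klFun_nonneg (div_nonneg hb hq.le))),
    mul_eq_zero, mul_eq_zero, klFun_eq_zero_iff (div_nonneg ha hp.le),
    klFun_eq_zero_iff (div_nonneg hb hq.le), div_eq_one_iff_eq hp.ne', div_eq_one_iff_eq hq.ne']
  simp only [hp.ne', hq.ne', false_or, and_iff_left_iff_imp]
  intro h; linarith

end TwoPoint

noncomputable def rateFunction (lam x : ℝ) : ℝ :=
  x / 2 * log lam - log (2 * √lam / (1 + lam)) + (1 + x) * log √(1 + x) + (1 - x) * log √(1 - x)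

lemma rateFunction_eq_relEntropy {lam x : ℝ} (hlam : 0 < lam) (hx0 : -1 < x) (hx1 : x ≤ 1) :
    rateFunction lam x = (1 + x) / 2 * log ((1 + x) / 2 / (1 / (1 + lam)))
      + (1 - x) / 2 * log ((1 - x) / 2 / (lam / (1 + lam))) := by
  have hx : 0 < 1 + x := by linarith
  have hl : 0 < 1 + lam := by linarith
  rw [rateFunction, log_sqrt hx.le, log_sqrt (by linarith), log_div (by positivity) hl.ne',
    log_mul two_ne_zero (by positivity), log_sqrt hlam.le,
    show (1 + x) / 2 / (1 / (1 + lam)) = (1 + x) * (1 + lam) / 2 by field_simp,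
    log_div (by positivity) two_ne_zero, log_mul hx.ne' hl.ne']
  rcases (sub_nonneg.2 hx1).eq_or_lt with h | h
  · obtain rfl : x = 1 := by linarith
    simp only [sub_self, zero_div, zero_mul, add_zero]
    ring
  rw [show (1 - x) / 2 / (lam / (1 + lam)) = (1 - x) * (1 + lam) / (2 * lam) by field_simp,
    log_div (by positivity) (by positivity), log_mul h.ne' hl.ne', log_mul two_ne_zero hlam.ne']
  ring

theorem stmt7 (lam x : ℝ) (h0 : 0 < lam) (hx0 : 0 ≤ x) (hx1 : x ≤ 1) :
    0 ≤ x / 2 * Real.log lam - Real.log (2 * Real.sqrt lam / (1 + lam))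
        + (1 + x) * Real.log (Real.sqrt (1 + x))
        + (1 - x) * Real.log (Real.sqrt (1 - x)) ∧
    (x / 2 * Real.log lam - Real.log (2 * Real.sqrt lam / (1 + lam))
        + (1 + x) * Real.log (Real.sqrt (1 + x))
        + (1 - x) * Real.log (Real.sqrt (1 - x)) = 0 ↔ x = (1 - lam) / (1 + lam)) := by
  have hl : 0 < 1 + lam := by linarith
  have ha : 0 ≤ (1 + x) / 2 := by linarith
  have hb : 0 ≤ (1 - x) / 2 := by linarith
  have hp : 0 < 1 / (1 + lam) := by positivity
  have hq : 0 < lam / (1 + lam) := by positivity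
  have hsum : (1 + x) / 2 + (1 - x) / 2 = 1 / (1 + lam) + lam / (1 + lam) := by
    field_simp; ring
  change 0 ≤ rateFunction lam x ∧ (rateFunction lam x = 0 ↔ _)
  rw [rateFunction_eq_relEntropy h0 (by linarith) hx1,
    mul_log_div_add_mul_log_div_eq_zero_iff ha hb hp hq hsum,
    div_eq_div_iff two_ne_zero hl.ne', eq_div_iff hl.ne']
  exact ⟨mul_log_div_add_mul_log_div_nonneg ha hb hp hq hsum, by constructor <;> intro <;> linarith⟩
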